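/- The fixed-penalty matching distance d_{M,ρ} with penalty ρ > 0 satisfies the triangle inequality: d_{M,ρ}(X,Y) ≤ d_{M,ρ}(X,Z) + d_{M,ρ}(Z,Y) for all finite multisets X, Y, Z over a metric space. -/

import Mathlib

/-!
Two matchings `M : A ↔ C` and `N : C ↔ B` compose through their common elements of `C`:
each element of `C` matched on both sides yields a pair of `A × B` whose distance is at most
the sum of the two distances it replaces, by the triangle inequality in the metric space.
Composition loses at most `|C|` matched pairs in total, so the penalties `ρ` paid for
newly unmatched elements of `A` and `B` are offset by the penalties paid for `C` in the
two original costs.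
-/

/-- `M` is a matching of the multisets `A` and `B`: a multiset of pairs `(x, y)` with
`x ∈ A`, `y ∈ B`, using each element of `A` and of `B` at most once, counting
multiplicity. -/
def IsMatching {α : Type*} (A B : Multiset α) (M : Multiset (α × α)) : Prop :=
  M.map Prod.fst ≤ A ∧ M.map Prod.snd ≤ B

/-- Cost of a matching `M` for the fixed-penalty matching distance: sum of pairwise
distances of matched elements plus `ρ` for each unmatched element. -/
noncomputable def fpMatchingCost {α : Type*} [MetricSpace α] (ρ : ℝ)
    (A B : Multiset α) (M : Multiset (α × α)) : ℝ :=
  (M.map fun p => dist p.1 p.2).sum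
    + ρ * ((A.card : ℝ) + (B.card : ℝ) - 2 * (M.card : ℝ))

/-- The fixed-penalty matching distance `d_{M,ρ}`: minimal cost over all matchings. -/
noncomputable def dFPMatch {α : Type*} [MetricSpace α] (ρ : ℝ) (A B : Multiset α) : ℝ :=
  sInf {c | ∃ M, IsMatching A B M ∧ c = fpMatchingCost ρ A B M}

section Matching

variable {α : Type*} {A B : Multiset α} {M : Multiset (α × α)}

lemma isMatching_zero (A B : Multiset α) : IsMatching A B 0 := by
  simp [IsMatching]

lemma IsMatching.card_le_left (hM : IsMatching A B M) : M.card ≤ A.card := by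
  simpa using Multiset.card_le_card hM.1

lemma IsMatching.card_le_right (hM : IsMatching A B M) : M.card ≤ B.card := by
  simpa using Multiset.card_le_card hM.2

end Matching

section Composition

variable {α : Type*} [PseudoMetricSpace α]

lemma sum_map_dist_nonneg (M : Multiset (α × α)) : 0 ≤ (M.map fun p => dist p.1 p.2).sum :=
  Multiset.sum_nonneg fun _ hx => by
    obtain ⟨p, -, rfl⟩ := Multiset.mem_map.mp hx
    exact dist_nonneg

lemma exists_comp_matching (M N : Multiset (α × α)) (C : Multiset α)
    (hM : M.map Prod.snd ≤ C) (hN : N.map Prod.fst ≤ C) :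
    ∃ P : Multiset (α × α),
      P.map Prod.fst ≤ M.map Prod.fst ∧ P.map Prod.snd ≤ N.map Prod.snd ∧
      (P.map fun p => dist p.1 p.2).sum ≤
        (M.map fun p => dist p.1 p.2).sum + (N.map fun p => dist p.1 p.2).sum ∧
      M.card + N.card ≤ C.card + P.card := by
  classical
  induction M using Multiset.induction generalizing N C with
  | empty =>
    refine ⟨0, by simp, by simp, by simpa using sum_map_dist_nonneg N, ?_⟩
    simpa using Multiset.card_le_card hN
  | cons p M ih =>
    obtain ⟨a, c⟩ := p
    obtain ⟨C, rfl⟩ := Multiset.exists_cons_of_mem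
      (Multiset.mem_of_le hM (by simp) : c ∈ C)
    simp only [Multiset.map_cons, Multiset.cons_le_cons_iff] at hM
    by_cases hcN : c ∈ N.map Prod.fst
    · obtain ⟨⟨c', b⟩, hq, rfl⟩ := Multiset.mem_map.mp hcN
      obtain ⟨N, rfl⟩ := Multiset.exists_cons_of_mem hq
      simp only [Multiset.map_cons, Multiset.cons_le_cons_iff] at hN
      obtain ⟨P, hPM, hPN, hdist, hcard⟩ := ih N C hM hN
      refine ⟨(a, b) ::ₘ P, by simpa using hPM, by simpa using hPN, ?_, by simp; omega⟩
      have : dist a b ≤ dist a c' + dist c' b := dist_triangle _ _ _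
      simp only [Multiset.map_cons, Multiset.sum_cons]
      linarith
    · obtain ⟨P, hPM, hPN, hdist, hcard⟩ :=
        ih N C hM ((Multiset.le_cons_of_notMem hcN).mp hN)
      refine ⟨P, hPM.trans (by simpa using Multiset.le_cons_self _ a), hPN, ?_, by simp; omega⟩
      have : 0 ≤ dist a c := dist_nonneg
      simp only [Multiset.map_cons, Multiset.sum_cons]
      linarith

end Composition

section Distance

variable {α : Type*} [MetricSpace α] {ρ : ℝ} {A B C : Multiset α} {M N : Multiset (α × α)}

lemma fpMatchingCost_nonneg (hρ : 0 ≤ ρ) (hM : IsMatching A B M) :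
    0 ≤ fpMatchingCost ρ A B M := by
  have hA : (M.card : ℝ) ≤ A.card := by exact_mod_cast hM.card_le_left
  have hB : (M.card : ℝ) ≤ B.card := by exact_mod_cast hM.card_le_right
  unfold fpMatchingCost
  have := sum_map_dist_nonneg M
  have := mul_nonneg hρ (by linarith : (0 : ℝ) ≤ A.card + B.card - 2 * M.card)
  linarith

lemma dFPMatch_le_fpMatchingCost (hρ : 0 ≤ ρ) (hM : IsMatching A B M) :
    dFPMatch ρ A B ≤ fpMatchingCost ρ A B M :=
  csInf_le ⟨0, by rintro _ ⟨M, hM, rfl⟩; exact fpMatchingCost_nonneg hρ hM⟩ ⟨M, hM, rfl⟩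

lemma le_dFPMatch {c : ℝ} (h : ∀ M, IsMatching A B M → c ≤ fpMatchingCost ρ A B M) :
    c ≤ dFPMatch ρ A B :=
  le_csInf ⟨_, 0, isMatching_zero A B, rfl⟩ (by rintro _ ⟨M, hM, rfl⟩; exact h M hM)

lemma dFPMatch_le_fpMatchingCost_add (hρ : 0 ≤ ρ) (hM : IsMatching A C M)
    (hN : IsMatching C B N) :
    dFPMatch ρ A B ≤ fpMatchingCost ρ A C M + fpMatchingCost ρ C B N := by
  obtain ⟨P, hPM, hPN, hdist, hcard⟩ := exists_comp_matching M N C hM.2 hN.1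
  refine (dFPMatch_le_fpMatchingCost hρ ⟨hPM.trans hM.1, hPN.trans hN.2⟩).trans ?_
  have hcard' : (M.card : ℝ) + N.card ≤ C.card + P.card := by exact_mod_cast hcard
  have := mul_le_mul_of_nonneg_left hcard' hρ
  unfold fpMatchingCost
  linarith

end Distance

/-- The fixed-penalty matching distance satisfies the triangle inequality. -/
theorem dFPMatch_triangle {α : Type*} [MetricSpace α] (ρ : ℝ) (hρ : 0 < ρ)
    (A B C : Multiset α) :
    dFPMatch ρ A B ≤ dFPMatch ρ A C + dFPMatch ρ C B := by
  have : dFPMatch ρ A B - dFPMatch ρ C B ≤ dFPMatch ρ A C :=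
    le_dFPMatch fun M hM => sub_le_comm.mp <| le_dFPMatch fun N hN =>
      sub_le_iff_le_add'.mpr (dFPMatch_le_fpMatchingCost_add hρ.le hM hN)
  linarith
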